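/- Let φ be an analytic self-map of 𝔻 such that C_φ is bounded on S_ν, and let S_ν⁰ be the quotient of S_ν by the constants (equivalently, the closed subspace of f ∈ S_ν with f(0) = 0, with the induced quotient operator C̃_φ f = f∘φ − f(φ(0))). If C_φ is recurrent on S_ν, then C̃_φ is recurrent on S_ν⁰. -/
import Mathlib


open Filter Topology

noncomputable def snormSq (ν : ℝ) (a : ℕ → ℂ) : ℝ :=
  ∑' n : ℕ, ‖a n‖ ^ 2 * ((n : ℝ) + 1) ^ (2 * ν)

def memS (ν : ℝ) (a : ℕ → ℂ) : Prop :=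
  Summable fun n : ℕ => ‖a n‖ ^ 2 * ((n : ℝ) + 1) ^ (2 * ν)

/-- The operator induced on `S_ν⁰` (functions with vanishing constant term) by zeroing
out the constant coefficient: `C̃_φ f = f∘φ - f(φ(0))`. -/
def tCop (Cop : (ℕ → ℂ) → (ℕ → ℂ)) : (ℕ → ℂ) → (ℕ → ℂ) :=
  fun a m => if m = 0 then 0 else Cop a m

/-- `f` is a recurrent vector of `F` for the `S_ν` norm. -/
def RecVec (ν : ℝ) (F : (ℕ → ℂ) → (ℕ → ℂ)) (f : ℕ → ℂ) : Prop :=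
  ∃ n : ℕ → ℕ, StrictMono n ∧ (∀ k, 0 < n k) ∧
    Tendsto (fun k => snormSq ν (fun m => F^[n k] f m - f m)) atTop (𝓝 0)

lemma wt_nonneg (ν : ℝ) (n : ℕ) : 0 ≤ ((n : ℝ) + 1) ^ (2 * ν) := by positivity

lemma memS_sub (ν : ℝ) {a b : ℕ → ℂ} (ha : memS ν a) (hb : memS ν b) :
    Summable fun n : ℕ => ‖a n - b n‖ ^ 2 * ((n : ℝ) + 1) ^ (2 * ν) := by
  have h : Summable fun n : ℕ =>
      (2 * ‖a n‖ ^ 2 + 2 * ‖b n‖ ^ 2) * ((n : ℝ) + 1) ^ (2 * ν) := by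
    have := ((ha.mul_left 2).add (hb.mul_left 2))
    simpa [add_mul, mul_assoc] using this
  refine Summable.of_nonneg_of_le (fun n => by positivity) (fun n => ?_) h
  have h1 : ‖a n - b n‖ ≤ ‖a n‖ + ‖b n‖ := norm_sub_le _ _
  have h2 : ‖a n - b n‖ ^ 2 ≤ 2 * ‖a n‖ ^ 2 + 2 * ‖b n‖ ^ 2 := by
    nlinarith [norm_nonneg (a n - b n), norm_nonneg (a n), norm_nonneg (b n),
      sq_nonneg (‖a n‖ - ‖b n‖)]
  exact mul_le_mul_of_nonneg_right h2 (wt_nonneg ν n)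

/-- If a composition operator `C_φ` (given on Taylor coefficients by `Cop`, whose
coefficients of index `≥ 1` depend only on the coefficients of index `≥ 1` of the
input) is recurrent on `S_ν`, then the induced operator `C̃_φ` is recurrent on `S_ν⁰`,
recurrence being expressed as density of the set of recurrent vectors. -/
theorem stmt19 (ν : ℝ) (Cop : (ℕ → ℂ) → (ℕ → ℂ))
    (hCmem : ∀ a, memS ν a → memS ν (Cop a))
    (hhigher : ∀ a b : ℕ → ℂ, (∀ m, 1 ≤ m → a m = b m) → ∀ m, 1 ≤ m → Cop a m = Cop b m)
    (hrec : ∀ g, memS ν g → ∀ ε > 0, ∃ f, memS ν f ∧ RecVec ν Cop f ∧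
      snormSq ν (fun m => g m - f m) < ε) :
    ∀ g, g 0 = 0 → memS ν g → ∀ ε > 0, ∃ f, f 0 = 0 ∧ memS ν f ∧
      RecVec ν (tCop Cop) f ∧ snormSq ν (fun m => g m - f m) < ε := by
  intro g hg0 hg ε hε
  obtain ⟨f', hf'mem, ⟨n, hmono, hpos, htend⟩, hclose⟩ := hrec g hg ε hε
  set f : ℕ → ℂ := fun m => if m = 0 then 0 else f' m with hf
  have hf0 : f 0 = 0 := rfl
  have hfhi : ∀ m, 1 ≤ m → f m = f' m := by
    intro m hm; simp [hf, Nat.one_le_iff_ne_zero.mp hm]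
  -- memS f
  have hfmem : memS ν f := by
    refine Summable.of_nonneg_of_le (fun m => by positivity) (fun m => ?_) hf'mem
    rcases Nat.eq_zero_or_pos m with h | h
    · subst h; simp [hf]
    · rw [hfhi m h]
  -- iterates of Cop preserve memS
  have hiter_mem : ∀ j, memS ν (Cop^[j] f') := by
    intro j; induction j with
    | zero => simpa using hf'mem
    | succ j ih => rw [Function.iterate_succ_apply']; exact hCmem _ ih
  -- iterates of tCop agree with iterates of Cop on indices ≥ 1
  have hagree : ∀ j m, 1 ≤ m → (tCop Cop)^[j] f m = Cop^[j] f' m := by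
    intro j; induction j with
    | zero => intro m hm; simpa using hfhi m hm
    | succ j ih =>
      intro m hm
      rw [Function.iterate_succ_apply', Function.iterate_succ_apply']
      have : tCop Cop ((tCop Cop)^[j] f) m = Cop ((tCop Cop)^[j] f) m := by
        simp [tCop, Nat.one_le_iff_ne_zero.mp hm]
      rw [this]
      exact hhigher _ _ ih m hm
  -- iterates of tCop vanish at 0
  have hzero : ∀ j, (tCop Cop)^[j] f 0 = 0 := by
    intro j; induction j with
    | zero => simpa using hf0
    | succ j ih => rw [Function.iterate_succ_apply']; simp [tCop]
  -- closeness
  have hsub' : Summable fun m : ℕ => ‖g m - f' m‖ ^ 2 * ((m : ℝ) + 1) ^ (2 * ν) :=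
    memS_sub ν hg hf'mem
  have hle : snormSq ν (fun m => g m - f m) ≤ snormSq ν (fun m => g m - f' m) := by
    have key : ∀ m : ℕ, ‖g m - f m‖ ^ 2 * ((m : ℝ) + 1) ^ (2 * ν) ≤
        ‖g m - f' m‖ ^ 2 * ((m : ℝ) + 1) ^ (2 * ν) := by
      intro m
      rcases Nat.eq_zero_or_pos m with h | h
      · subst h; simp [hg0, hf0]
      · rw [hfhi m h]
    exact Summable.tsum_le_tsum key
      (Summable.of_nonneg_of_le (fun m => by positivity) key hsub') hsub'
  -- recurrence
  refine ⟨f, hf0, hfmem, ⟨n, hmono, hpos, ?_⟩, lt_of_le_of_lt hle hclose⟩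
  have hnonneg : ∀ k, 0 ≤ snormSq ν (fun m => (tCop Cop)^[n k] f m - f m) := by
    intro k; exact tsum_nonneg fun m => by positivity
  have hle2 : ∀ k, snormSq ν (fun m => (tCop Cop)^[n k] f m - f m) ≤
      snormSq ν (fun m => Cop^[n k] f' m - f' m) := by
    intro k
    have hsub2 : Summable fun m : ℕ =>
        ‖Cop^[n k] f' m - f' m‖ ^ 2 * ((m : ℝ) + 1) ^ (2 * ν) :=
      memS_sub ν (hiter_mem (n k)) hf'mem
    have key : ∀ m : ℕ,
        ‖(tCop Cop)^[n k] f m - f m‖ ^ 2 * ((m : ℝ) + 1) ^ (2 * ν) ≤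
        ‖Cop^[n k] f' m - f' m‖ ^ 2 * ((m : ℝ) + 1) ^ (2 * ν) := by
      intro m
      rcases Nat.eq_zero_or_pos m with h | h
      · subst h; rw [hzero (n k), hf0]; simp
      · rw [hagree (n k) m h, hfhi m h]
    exact Summable.tsum_le_tsum key
      (Summable.of_nonneg_of_le (fun m => by positivity) key hsub2) hsub2
  exact squeeze_zero hnonneg hle2 htend
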